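/- Let δ ∈ ℝ. Let E : ℝ³ → ℂ³ be a smooth vector field with div E = 0 and ‖E‖_{1,δ} < ∞, and let η : ℝ³ → ℂ be smooth with ‖η‖_{1,−2−δ} < ∞. Then the function x ↦ Σ_{i=1}^{3} E_i(x)·conj(∂_iη(x)) is integrable on ℝ³ and ∫_{ℝ³} Σ_{i=1}^{3} E_i(x)·conj(∂_iη(x)) dx = 0; that is, a divergence-free field of weight δ is L²-orthogonal to the gradient of any function of weight −2−δ. -/

import Mathlib

open MeasureTheory Real Filter
open Topology
open scoped ContDiff

set_option maxHeartbeats 2000000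

noncomputable section

abbrev E3 : Type := EuclideanSpace ℝ (Fin 3)

/-- Square of the weighted Sobolev norm `‖u‖_{j,δ}²`, as an extended real, so that
`wnormSq j δ u < ⊤` expresses `‖u‖_{j,δ} < ∞`. -/
def wnormSq {F : Type*} [NormedAddCommGroup F] [NormedSpace ℝ F] (j : ℕ) (δ : ℝ)
    (u : E3 → F) : ENNReal :=
  ∑ n ∈ Finset.range (j + 1),
    ∫⁻ x : E3, ENNReal.ofReal
      (((1 : ℝ) + ‖x‖ ^ 2) ^ ((n : ℝ) - δ - 3 / 2) * ‖iteratedFDeriv ℝ n u x‖ ^ 2)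

/-- The weighted Sobolev norm `‖u‖_{j,δ}`. -/
def wnorm {F : Type*} [NormedAddCommGroup F] [NormedSpace ℝ F] (j : ℕ) (δ : ℝ)
    (u : E3 → F) : ℝ := Real.sqrt (wnormSq j δ u).toReal

abbrev EC3 : Type := EuclideanSpace ℂ (Fin 3)

/-- Spatial partial derivative `∂ᵢh` of a complex-valued function on `ℝ³`. -/
def pd (i : Fin 3) (h : E3 → ℂ) (x : E3) : ℂ := fderiv ℝ h x (EuclideanSpace.single i (1 : ℝ))

/-- The curl of a complex vector field on `ℝ³`:
`curl V = (∂₂V₃ − ∂₃V₂, ∂₃V₁ − ∂₁V₃, ∂₁V₂ − ∂₂V₁)` (with 0-based indices). -/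
def curlV (V : E3 → EC3) (x : E3) : EC3 :=
  (WithLp.equiv 2 (Fin 3 → ℂ)).symm
    ![pd 1 (fun y => V y 2) x - pd 2 (fun y => V y 1) x,
      pd 2 (fun y => V y 0) x - pd 0 (fun y => V y 2) x,
      pd 0 (fun y => V y 1) x - pd 1 (fun y => V y 0) x]

/-- The divergence of a complex vector field on `ℝ³`. -/
def divV (V : E3 → EC3) (x : E3) : ℂ := ∑ i : Fin 3, pd i (fun y => V y i) x

/-! ### Auxiliary lemmas -/

lemma coordNorm_le (V : EC3) (i : Fin 3) : ‖V i‖ ≤ ‖V‖ := by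
  rw [EuclideanSpace.norm_eq]
  refine (Real.le_sqrt (norm_nonneg _) (by positivity)).2 ?_
  exact Finset.single_le_sum (f := fun j => ‖V j‖ ^ 2) (fun j _ => by positivity) (Finset.mem_univ i)

lemma integrable_of_nonneg_lintegral {f : E3 → ℝ} (hm : AEStronglyMeasurable f (volume : Measure E3))
    (h0 : ∀ x, 0 ≤ f x)
    (h : (∫⁻ x, ENNReal.ofReal (f x)) < ⊤) : Integrable f := by
  refine ⟨hm, ?_⟩
  rw [hasFiniteIntegral_iff_ofReal (Eventually.of_forall h0)]
  exact h

lemma pointwise_amgm {a b : ℝ} (x : E3) (nf ng : ℝ) (hnf : 0 ≤ nf) (hng : 0 ≤ ng) :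
    ((1:ℝ)+‖x‖^2) ^ ((a+b)/2) * (nf * ng) ≤
      ((1:ℝ)+‖x‖^2) ^ a * nf^2 + ((1:ℝ)+‖x‖^2) ^ b * ng^2 := by
  have hw : (0:ℝ) < 1 + ‖x‖^2 := by positivity
  set u := ((1:ℝ)+‖x‖^2) ^ (a/2) * nf with hu
  set v := ((1:ℝ)+‖x‖^2) ^ (b/2) * ng with hv
  have hu0 : 0 ≤ u := by positivity
  have hv0 : 0 ≤ v := by positivity
  have h1 : ((1:ℝ)+‖x‖^2) ^ ((a+b)/2) * (nf * ng) = u * v := by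
    rw [hu, hv]
    rw [show (a+b)/2 = a/2 + b/2 by ring, Real.rpow_add hw]
    ring
  have h2 : ((1:ℝ)+‖x‖^2) ^ a * nf^2 = u^2 := by
    rw [hu, mul_pow, ← Real.rpow_natCast (((1:ℝ)+‖x‖^2) ^ (a/2)) 2,
      ← Real.rpow_mul hw.le]
    norm_num
  have h3 : ((1:ℝ)+‖x‖^2) ^ b * ng^2 = v^2 := by
    rw [hv, mul_pow, ← Real.rpow_natCast (((1:ℝ)+‖x‖^2) ^ (b/2)) 2,
      ← Real.rpow_mul hw.le]
    norm_num
  rw [h1, h2, h3]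
  nlinarith [sq_nonneg (u - v), mul_nonneg hu0 hv0]

lemma majorant_integrable {a b : ℝ} {F G : Type*} [NormedAddCommGroup F] [NormedAddCommGroup G]
    {f : E3 → F} {g : E3 → G} (hf : Continuous f) (hg : Continuous g)
    (h1 : (∫⁻ x : E3, ENNReal.ofReal (((1:ℝ)+‖x‖^2) ^ a * ‖f x‖^2)) < ⊤)
    (h2 : (∫⁻ x : E3, ENNReal.ofReal (((1:ℝ)+‖x‖^2) ^ b * ‖g x‖^2)) < ⊤) :
    Integrable (fun x : E3 => ((1:ℝ)+‖x‖^2) ^ a * ‖f x‖^2 + ((1:ℝ)+‖x‖^2) ^ b * ‖g x‖^2) := by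
  have hwc : Continuous (fun x : E3 => (1:ℝ)+‖x‖^2) := by continuity
  have hwa : ∀ c : ℝ, Continuous (fun x : E3 => ((1:ℝ)+‖x‖^2) ^ c) := fun c =>
    hwc.rpow_const (fun x => Or.inl (by positivity))
  have hcont : Continuous
      (fun x : E3 => ((1:ℝ)+‖x‖^2) ^ a * ‖f x‖^2 + ((1:ℝ)+‖x‖^2) ^ b * ‖g x‖^2) :=
    ((hwa a).mul ((hf.norm).pow 2)).add ((hwa b).mul ((hg.norm).pow 2))
  refine integrable_of_nonneg_lintegral hcont.aestronglyMeasurable (fun x => by positivity) ?_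
  calc (∫⁻ x : E3, ENNReal.ofReal (((1:ℝ)+‖x‖^2) ^ a * ‖f x‖^2 + ((1:ℝ)+‖x‖^2) ^ b * ‖g x‖^2))
      = (∫⁻ x : E3, ENNReal.ofReal (((1:ℝ)+‖x‖^2) ^ a * ‖f x‖^2)
          + ENNReal.ofReal (((1:ℝ)+‖x‖^2) ^ b * ‖g x‖^2)) := by
        congr 1; ext x; rw [ENNReal.ofReal_add (by positivity) (by positivity)]
    _ < ⊤ := by
        rw [lintegral_add_left]
        · exact ENNReal.add_lt_top.2 ⟨h1, h2⟩
        · exact ((hwa a).mul ((hf.norm).pow 2)).measurable.ennreal_ofReal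

lemma wnormSq_fin {F : Type*} [NormedAddCommGroup F] [NormedSpace ℝ F] {δ : ℝ} {u : E3 → F}
    (h : wnormSq 1 δ u < ⊤) :
    (∫⁻ x : E3, ENNReal.ofReal (((1:ℝ)+‖x‖^2) ^ (-δ-3/2) * ‖u x‖^2)) < ⊤ ∧
    (∫⁻ x : E3, ENNReal.ofReal (((1:ℝ)+‖x‖^2) ^ (1-δ-3/2) * ‖fderiv ℝ u x‖^2)) < ⊤ := by
  rw [wnormSq, Finset.sum_range_succ, Finset.sum_range_one, ENNReal.add_lt_top] at h
  obtain ⟨h0, h1⟩ := h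
  have e1 : ∀ x : E3, ‖iteratedFDeriv ℝ 1 u x‖ = ‖fderiv ℝ u x‖ := fun x => by
    rw [← norm_iteratedFDeriv_fderiv, norm_iteratedFDeriv_zero]
  constructor
  · simp only [Nat.cast_zero, zero_sub, norm_iteratedFDeriv_zero] at h0
    exact h0
  · simp only [Nat.cast_one, e1] at h1
    exact h1

/-! ### Cutoff functions -/

def bump0 : ContDiffBump (0 : E3) := ⟨1, 2, one_pos, one_lt_two⟩

def chi (R : ℝ) (x : E3) : ℝ := bump0 (R⁻¹ • x)

section chiR
variable {R : ℝ} (hR : 1 ≤ R)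
include hR

lemma hRpos : 0 < R := lt_of_lt_of_le one_pos hR

omit hR in
lemma chi_smooth : ContDiff ℝ ∞ (chi R) := by
  exact bump0.contDiff.comp (contDiff_id.const_smul R⁻¹)

lemma chi_one {x : E3} (hx : ‖x‖ ≤ R) : chi R x = 1 := by
  apply bump0.one_of_mem_closedBall
  simp only [Metric.mem_closedBall, dist_zero_right, norm_smul, norm_inv, Real.norm_eq_abs,
    abs_of_pos (hRpos hR)]
  rw [inv_mul_le_iff₀ (hRpos hR)]
  simpa [bump0] using hx

lemma chi_zero {x : E3} (hx : 2 * R ≤ ‖x‖) : chi R x = 0 := by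
  apply bump0.zero_of_le_dist
  simp only [dist_zero_right, norm_smul, norm_inv, Real.norm_eq_abs, abs_of_pos (hRpos hR)]
  show (2:ℝ) ≤ _
  rw [le_inv_mul_iff₀ (hRpos hR)]
  linarith

omit hR in
lemma chi_nonneg (x : E3) : 0 ≤ chi R x := bump0.nonneg

omit hR in
lemma chi_le_one (x : E3) : chi R x ≤ 1 := bump0.le_one

lemma chi_compact_support : HasCompactSupport (chi R) := by
  apply HasCompactSupport.intro (isCompact_closedBall (0:E3) (2*R))
  intro x hx
  simp only [Metric.mem_closedBall, dist_zero_right, not_le] at hx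
  exact chi_zero hR hx.le

omit hR in
lemma chi_hasFDerivAt (x : E3) :
    HasFDerivAt (chi R) ((fderiv ℝ (⇑bump0) (R⁻¹ • x)).comp
      (R⁻¹ • ContinuousLinearMap.id ℝ E3)) x := by
  have h1 : HasFDerivAt (fun y : E3 => R⁻¹ • y) (R⁻¹ • ContinuousLinearMap.id ℝ E3) x := by
    exact (hasFDerivAt_id x).const_smul R⁻¹
  exact (((bump0.contDiff (n := 1)).differentiable
    (by simp)) (R⁻¹ • x)).hasFDerivAt.comp x h1

omit hR in
lemma fderiv_chi (x : E3) : fderiv ℝ (chi R) x =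
    (fderiv ℝ (⇑bump0) (R⁻¹ • x)).comp (R⁻¹ • ContinuousLinearMap.id ℝ E3) :=
  (chi_hasFDerivAt x).fderiv

lemma fderiv_chi_norm_le {C : ℝ} (hC : ∀ y, ‖fderiv ℝ (⇑bump0) y‖ ≤ C) (x : E3) :
    ‖fderiv ℝ (chi R) x‖ ≤ C * R⁻¹ := by
  rw [fderiv_chi]
  calc ‖(fderiv ℝ (⇑bump0) (R⁻¹ • x)).comp (R⁻¹ • ContinuousLinearMap.id ℝ E3)‖
      ≤ ‖fderiv ℝ (⇑bump0) (R⁻¹ • x)‖ * ‖R⁻¹ • ContinuousLinearMap.id ℝ E3‖ :=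
        ContinuousLinearMap.opNorm_comp_le _ _
    _ ≤ C * R⁻¹ := by
        apply mul_le_mul (hC _) ?_ (norm_nonneg _)
          ((norm_nonneg _).trans (hC (R⁻¹ • x)))
        apply ContinuousLinearMap.opNorm_le_bound _ (inv_nonneg.2 (hRpos hR).le)
        intro y
        have : (R⁻¹ • ContinuousLinearMap.id ℝ E3) y = R⁻¹ • y := rfl
        rw [this, norm_smul, norm_inv, Real.norm_eq_abs, abs_of_pos (hRpos hR)]

lemma fderiv_chi_zero {x : E3} (hx : ‖x‖ < R) : fderiv ℝ (chi R) x = 0 := by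
  have hev : chi R =ᶠ[nhds x] fun _ => (1:ℝ) := by
    filter_upwards [Metric.ball_mem_nhds x (show (0:ℝ) < R - ‖x‖ by linarith)] with y hy
    apply chi_one hR
    have h2 := dist_triangle y x 0
    simp only [Metric.mem_ball] at hy
    simp only [dist_zero_right] at h2
    linarith
  rw [hev.fderiv_eq]
  exact fderiv_const_apply 1

lemma fderiv_chi_zero_far {x : E3} (hx : 2 * R < ‖x‖) : fderiv ℝ (chi R) x = 0 := by
  have hev : chi R =ᶠ[nhds x] fun _ => (0:ℝ) := by
    filter_upwards [Metric.ball_mem_nhds x (show (0:ℝ) < ‖x‖ - 2*R by linarith)] with y hy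
    apply chi_zero hR
    simp only [Metric.mem_ball] at hy
    have h2 := dist_triangle x y 0
    simp only [dist_zero_right] at h2
    rw [dist_comm] at hy
    linarith
  rw [hev.fderiv_eq]
  exact fderiv_const_apply 0

end chiR

theorem stmt15 (δ : ℝ) (E : E3 → EC3) (η : E3 → ℂ)
    (hE : ContDiff ℝ (⊤ : ℕ∞) E) (hη : ContDiff ℝ (⊤ : ℕ∞) η)
    (hdiv : ∀ x, divV E x = 0)
    (hEnorm : wnormSq 1 δ E < ⊤) (hηnorm : wnormSq 1 (-2 - δ) η < ⊤) :
    Integrable (fun x : E3 => ∑ i : Fin 3, E x i * (starRingEnd ℂ) (pd i η x)) ∧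
      ∫ x : E3, ∑ i : Fin 3, E x i * (starRingEnd ℂ) (pd i η x) = 0 := by
  classical
  -- basic continuity / differentiability
  have hηd : Differentiable ℝ η := hη.differentiable (by simp)
  have hfdη : Continuous (fderiv ℝ η) := hη.continuous_fderiv (by simp)
  have hEc : Continuous E := hE.continuous
  have hηc : Continuous η := hη.continuous
  set v : Fin 3 → E3 := fun i => EuclideanSpace.single i (1:ℝ) with hv
  have hvnorm : ∀ i, ‖v i‖ = 1 := fun i => by
    simp [hv, EuclideanSpace.norm_single]
  have cpd : ∀ i, Continuous (pd i η) := fun i =>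
    (ContinuousLinearMap.apply ℝ ℂ (v i)).continuous.comp hfdη
  have cEi : ∀ i : Fin 3, Continuous fun x => E x i := fun i =>
    ((EuclideanSpace.proj i : EC3 →L[ℂ] ℂ).continuous).comp hEc
  have hEid : ∀ (i : Fin 3), Differentiable ℝ (fun x => E x i) := fun i =>
    (((EuclideanSpace.proj i : EC3 →L[ℂ] ℂ).restrictScalars ℝ).differentiable).comp
      (hE.differentiable (by simp))
  have hEsm_i : ∀ i : Fin 3, ContDiff ℝ ∞ (fun x => E x i) := fun i =>
    (((EuclideanSpace.proj i : EC3 →L[ℂ] ℂ).restrictScalars ℝ).contDiff).comp (hE.of_le (by simp))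
  obtain ⟨hE0, hE1⟩ := wnormSq_fin hEnorm
  obtain ⟨hη0, hη1⟩ := wnormSq_fin hηnorm
  set M1 : E3 → ℝ := fun x =>
    ((1:ℝ)+‖x‖^2) ^ (-δ-3/2) * ‖E x‖^2
      + ((1:ℝ)+‖x‖^2) ^ (1-(-2-δ)-3/2) * ‖fderiv ℝ η x‖^2 with hM1def
  have hM1 : Integrable M1 := majorant_integrable hEc hfdη hE0 hη1
  set M2 : E3 → ℝ := fun x =>
    ((1:ℝ)+‖x‖^2) ^ (-δ-3/2) * ‖E x‖^2
      + ((1:ℝ)+‖x‖^2) ^ (-(-2-δ)-3/2) * ‖η x‖^2 with hM2def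
  have hM2 : Integrable M2 := majorant_integrable hEc hηc hE0 hη0
  have hM1nn : ∀ x, 0 ≤ M1 x := fun x => by rw [hM1def]; positivity
  have hM2nn : ∀ x, 0 ≤ M2 x := fun x => by rw [hM2def]; positivity
  have hpd_le : ∀ (i : Fin 3) x, ‖pd i η x‖ ≤ ‖fderiv ℝ η x‖ := fun i x => by
    calc ‖fderiv ℝ η x (v i)‖ ≤ ‖fderiv ℝ η x‖ * ‖v i‖ := (fderiv ℝ η x).le_opNorm _
      _ = ‖fderiv ℝ η x‖ := by rw [hvnorm i, mul_one]
  have hEprod_le : ∀ x, ‖E x‖ * ‖fderiv ℝ η x‖ ≤ M1 x := fun x => by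
    have h := pointwise_amgm (a := -δ-3/2) (b := 1-(-2-δ)-3/2) x ‖E x‖ ‖fderiv ℝ η x‖
      (norm_nonneg _) (norm_nonneg _)
    have he : ((-δ-3/2) + (1-(-2-δ)-3/2))/2 = (0:ℝ) := by ring
    rw [he, Real.rpow_zero, one_mul] at h
    exact h
  have key1 : ∀ x, ‖∑ i : Fin 3, E x i * (starRingEnd ℂ) (pd i η x)‖ ≤ 3 * M1 x := fun x => by
    calc ‖∑ i : Fin 3, E x i * (starRingEnd ℂ) (pd i η x)‖
        ≤ ∑ i : Fin 3, ‖E x i * (starRingEnd ℂ) (pd i η x)‖ := norm_sum_le _ _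
      _ ≤ ∑ _i : Fin 3, ‖E x‖ * ‖fderiv ℝ η x‖ := by
          apply Finset.sum_le_sum
          intro i _
          rw [norm_mul, show ‖(starRingEnd ℂ) (pd i η x)‖ = ‖pd i η x‖ from norm_star _]
          exact mul_le_mul (coordNorm_le _ i) (hpd_le i x) (norm_nonneg _) (norm_nonneg _)
      _ = 3 * (‖E x‖ * ‖fderiv ℝ η x‖) := by
          rw [Finset.sum_const, Finset.card_univ, Fintype.card_fin, nsmul_eq_mul]
          push_cast
          ring
      _ ≤ 3 * M1 x := by linarith [hEprod_le x]
  have ctarget : Continuous (fun x : E3 => ∑ i : Fin 3, E x i * (starRingEnd ℂ) (pd i η x)) :=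
    continuous_finset_sum _ fun i _ => (cEi i).mul (continuous_star.comp (cpd i))
  have hTargetInt : Integrable (fun x : E3 => ∑ i : Fin 3, E x i * (starRingEnd ℂ) (pd i η x)) :=
    Integrable.mono' (hM1.const_mul 3) ctarget.aestronglyMeasurable
      (Eventually.of_forall key1)
  refine ⟨hTargetInt, ?_⟩
  -- the bump-derivative bound
  obtain ⟨C, hC⟩ : ∃ C, ∀ y, ‖fderiv ℝ (⇑bump0) y‖ ≤ C :=
    (bump0.hasCompactSupport.fderiv (𝕜 := ℝ)).exists_bound_of_continuous
      ((bump0.contDiff (n := 1)).continuous_fderiv (by simp))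
  have hC0 : 0 ≤ C := (norm_nonneg _).trans (hC 0)
  -- cutoff functions
  set R : ℕ → ℝ := fun n => (n:ℝ) + 1 with hRdef
  have hR1 : ∀ n, 1 ≤ R n := fun n => by
    rw [hRdef]
    simp only []
    have : (0:ℝ) ≤ (n:ℝ) := Nat.cast_nonneg n
    linarith
  set χC : ℕ → E3 → ℂ := fun n x => ((chi (R n) x : ℝ) : ℂ) with hχCdef
  have hχCder : ∀ n x, HasFDerivAt (χC n) (Complex.ofRealCLM.comp (fderiv ℝ (chi (R n)) x)) x := by
    intro n x
    exact (Complex.ofRealCLM.hasFDerivAt (x := chi (R n) x)).comp x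
      ((chi_smooth.differentiable (by simp)) x).hasFDerivAt
  have hχC_fd : ∀ n x, fderiv ℝ (χC n) x = Complex.ofRealCLM.comp (fderiv ℝ (chi (R n)) x) :=
    fun n x => (hχCder n x).fderiv
  have hχC_pd_bound : ∀ n (i : Fin 3) x, ‖fderiv ℝ (χC n) x (v i)‖ ≤ C * (R n)⁻¹ := by
    intro n i x
    rw [hχC_fd]
    calc ‖(Complex.ofRealCLM.comp (fderiv ℝ (chi (R n)) x)) (v i)‖
        = ‖fderiv ℝ (chi (R n)) x (v i)‖ := by
          simp [Complex.norm_real]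
      _ ≤ ‖fderiv ℝ (chi (R n)) x‖ * ‖v i‖ := (fderiv ℝ (chi (R n)) x).le_opNorm _
      _ = ‖fderiv ℝ (chi (R n)) x‖ := by rw [hvnorm i, mul_one]
      _ ≤ C * (R n)⁻¹ := fderiv_chi_norm_le (hR1 n) hC x
  have hχC_zero_near : ∀ n x, ‖x‖ < R n → fderiv ℝ (χC n) x = 0 := by
    intro n x hx
    rw [hχC_fd, fderiv_chi_zero (hR1 n) hx]
    ext y
    simp
  have hχC_zero_far : ∀ n x, 2 * R n < ‖x‖ → fderiv ℝ (χC n) x = 0 := by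
    intro n x hx
    rw [hχC_fd, fderiv_chi_zero_far (hR1 n) hx]
    ext y
    simp
  have hχC_one : ∀ n x, ‖x‖ ≤ R n → χC n x = 1 := by
    intro n x hx
    rw [hχCdef]
    simp only []
    rw [chi_one (hR1 n) hx]
    norm_num
  have hχC_norm : ∀ n x, ‖χC n x‖ ≤ 1 := by
    intro n x
    rw [hχCdef]
    simp only [Complex.norm_real, Real.norm_eq_abs]
    rw [abs_le]
    exact ⟨by linarith [chi_nonneg (R := R n) x], chi_le_one (R := R n) x⟩
  have hχ_supp : ∀ n, HasCompactSupport (χC n) := fun n =>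
    (chi_compact_support (hR1 n)).comp_left (g := fun r : ℝ => (r:ℂ)) (by norm_num)
  have hχC_cont : ∀ n, Continuous (χC n) := fun n =>
    Complex.continuous_ofReal.comp chi_smooth.continuous
  have hχC_sm : ∀ n, ContDiff ℝ ∞ (χC n) := fun n =>
    Complex.ofRealCLM.contDiff.comp chi_smooth
  -- the conjugate function g
  set g : E3 → ℂ := fun x => (starRingEnd ℂ) (η x) with hgdef
  have hgfun : (fun z : ℂ => Complex.conjCLE z) ∘ η = g := by
    funext y
    simp [hgdef, Complex.conjCLE_apply]
  have hgder : ∀ x, HasFDerivAt g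
      ((Complex.conjCLE : ℂ →L[ℝ] ℂ).comp (fderiv ℝ η x)) x := by
    intro x
    rw [← hgfun]
    exact ((Complex.conjCLE : ℂ →L[ℝ] ℂ).hasFDerivAt (x := η x)).comp x (hηd x).hasFDerivAt
  have hg : Differentiable ℝ g := fun x => (hgder x).differentiableAt
  have cg : Continuous g := continuous_star.comp hηc
  have hg'v : ∀ (i : Fin 3) x, fderiv ℝ g x (v i) = (starRingEnd ℂ) (pd i η x) := by
    intro i x
    rw [(hgder x).fderiv]
    simp [pd, Complex.conjCLE_apply, hv]
  have cg' : ∀ i : Fin 3, Continuous (fun x => fderiv ℝ g x (v i)) := by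
    intro i
    have h : (fun x => fderiv ℝ g x (v i)) = fun x => (starRingEnd ℂ) (pd i η x) :=
      funext (hg'v i)
    rw [h]
    exact continuous_star.comp (cpd i)
  -- the cut-off fields
  set f : ℕ → Fin 3 → E3 → ℂ := fun n i x => χC n x * E x i with hfdef
  have hfder : ∀ n (i : Fin 3) x, HasFDerivAt (f n i)
      (χC n x • fderiv ℝ (fun y => E y i) x + E x i • fderiv ℝ (χC n) x) x := by
    intro n i x
    have h := (hχCder n x).mul ((hEid i) x).hasFDerivAt
    rw [hχC_fd]
    exact h
  have hfdiff : ∀ n (i : Fin 3), Differentiable ℝ (f n i) := fun n i x =>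
    (hfder n i x).differentiableAt
  have hf_sm : ∀ n (i : Fin 3), ContDiff ℝ ∞ (f n i) := fun n i => (hχC_sm n).mul (hEsm_i i)
  have hf_cont : ∀ n (i : Fin 3), Continuous (f n i) := fun n i => (hf_sm n i).continuous
  have hf_supp : ∀ n (i : Fin 3), HasCompactSupport (f n i) := fun n i => (hχ_supp n).mul_right
  have hf_fd_cont : ∀ n (i : Fin 3), Continuous fun x => fderiv ℝ (f n i) x (v i) := fun n i =>
    (ContinuousLinearMap.apply ℝ ℂ (v i)).continuous.comp
      ((hf_sm n i).continuous_fderiv (by simp))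
  have hf_fd_supp : ∀ n (i : Fin 3), HasCompactSupport fun x => fderiv ℝ (f n i) x (v i) :=
    fun n i => ((hf_supp n i).fderiv (𝕜 := ℝ)).comp_left (g := fun L : E3 →L[ℝ] ℂ => L (v i)) rfl
  -- integration by parts
  have hIBPi : ∀ n (i : Fin 3),
      ∫ x, f n i x * fderiv ℝ g x (v i) = -∫ x, fderiv ℝ (f n i) x (v i) * g x := by
    intro n i
    apply integral_mul_fderiv_eq_neg_fderiv_mul_of_integrable
    · exact ((hf_fd_cont n i).mul cg).integrable_of_hasCompactSupport ((hf_fd_supp n i).mul_right)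
    · exact ((hf_cont n i).mul (cg' i)).integrable_of_hasCompactSupport ((hf_supp n i).mul_right)
    · exact ((hf_cont n i).mul cg).integrable_of_hasCompactSupport ((hf_supp n i).mul_right)
    · exact fun x _ => hfdiff n i x
    · exact fun x _ => hg x
  have hIBP : ∀ n, (∫ x, ∑ i : Fin 3, f n i x * fderiv ℝ g x (v i))
      = -∫ x, ∑ i : Fin 3, fderiv ℝ (f n i) x (v i) * g x := by
    intro n
    rw [integral_finset_sum (f := fun i x => f n i x * fderiv ℝ g x (v i)) _ (fun i _ =>
        ((hf_cont n i).mul (cg' i)).integrable_of_hasCompactSupport ((hf_supp n i).mul_right)),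
      integral_finset_sum (f := fun i x => fderiv ℝ (f n i) x (v i) * g x) _ (fun i _ =>
        ((hf_fd_cont n i).mul cg).integrable_of_hasCompactSupport ((hf_fd_supp n i).mul_right))]
    rw [← Finset.sum_neg_distrib]
    exact Finset.sum_congr rfl fun i _ => hIBPi n i
  have hLHSeq : ∀ n x, (∑ i : Fin 3, f n i x * fderiv ℝ g x (v i))
      = ∑ i : Fin 3, χC n x * (E x i * (starRingEnd ℂ) (pd i η x)) := by
    intro n x
    refine Finset.sum_congr rfl fun i _ => ?_
    rw [hg'v i x]
    show χC n x * E x i * _ = _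
    ring
  have hRHSeq : ∀ n x, (∑ i : Fin 3, fderiv ℝ (f n i) x (v i) * g x)
      = (∑ i : Fin 3, fderiv ℝ (χC n) x (v i) * E x i) * g x := by
    intro n x
    rw [← Finset.sum_mul]
    congr 1
    have hterm : ∀ i : Fin 3, fderiv ℝ (f n i) x (v i)
        = χC n x * pd i (fun y => E y i) x + E x i * fderiv ℝ (χC n) x (v i) := by
      intro i
      rw [(hfder n i x).fderiv]
      simp [pd, ContinuousLinearMap.add_apply, ContinuousLinearMap.smul_apply, smul_eq_mul, hv]
    rw [Finset.sum_congr rfl (fun i _ => hterm i)]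
    rw [Finset.sum_add_distrib, ← Finset.mul_sum]
    have hd : (∑ i : Fin 3, pd i (fun y => E y i) x) = 0 := hdiv x
    rw [hd, mul_zero, zero_add]
    exact Finset.sum_congr rfl fun i _ => mul_comm _ _
  set T : ℕ → ℂ := fun n =>
    ∫ x, (∑ i : Fin 3, fderiv ℝ (χC n) x (v i) * E x i) * g x with hTdef
  set L : ℕ → ℂ := fun n =>
    ∫ x, ∑ i : Fin 3, χC n x * (E x i * (starRingEnd ℂ) (pd i η x)) with hLdef
  have hLT : ∀ n, L n = -T n := by
    intro n
    rw [hLdef, hTdef]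
    simp only []
    calc (∫ x, ∑ i : Fin 3, χC n x * (E x i * (starRingEnd ℂ) (pd i η x)))
        = ∫ x, ∑ i : Fin 3, f n i x * fderiv ℝ g x (v i) :=
          integral_congr_ae (Eventually.of_forall fun x => (hLHSeq n x).symm)
      _ = -∫ x, ∑ i : Fin 3, fderiv ℝ (f n i) x (v i) * g x := hIBP n
      _ = -∫ x, (∑ i : Fin 3, fderiv ℝ (χC n) x (v i) * E x i) * g x := by
          rw [integral_congr_ae (Eventually.of_forall fun x => hRHSeq n x)]
  -- bounding T
  have hGint : ∀ n, Integrable (({y : E3 | R n ≤ ‖y‖}).indicator (fun y => 9*C*(M2 y))) := by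
    intro n
    exact (hM2.const_mul (9*C)).indicator
      ((isClosed_le continuous_const continuous_norm).measurableSet)
  have hEtaProd_le : ∀ x, ((1:ℝ)+‖x‖^2) ^ (-(1:ℝ)/2) * (‖E x‖ * ‖η x‖) ≤ M2 x := fun x => by
    have h := pointwise_amgm (a := -δ-3/2) (b := -(-2-δ)-3/2) x ‖E x‖ ‖η x‖
      (norm_nonneg _) (norm_nonneg _)
    have he : ((-δ-3/2) + (-(-2-δ)-3/2))/2 = -(1:ℝ)/2 := by ring
    rw [he] at h
    exact h
  have hQbound : ∀ n x, ‖(∑ i : Fin 3, fderiv ℝ (χC n) x (v i) * E x i) * g x‖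
      ≤ ({y : E3 | R n ≤ ‖y‖}).indicator (fun y => 9*C*(M2 y)) x := by
    intro n x
    have hind_nn : 0 ≤ ({y : E3 | R n ≤ ‖y‖}).indicator (fun y => 9*C*(M2 y)) x :=
      Set.indicator_nonneg (fun y _ => by
        have := hM2nn y
        positivity) x
    have hQzero : fderiv ℝ (χC n) x = 0 →
        (∑ i : Fin 3, fderiv ℝ (χC n) x (v i) * E x i) * g x = 0 := by
      intro h0
      have hz : ∀ i : Fin 3, fderiv ℝ (χC n) x (v i) * E x i = 0 := fun i => by
        rw [h0]; simp
      rw [Finset.sum_congr rfl (fun i _ => hz i), Finset.sum_const_zero, zero_mul]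
    by_cases hnear : ‖x‖ < R n
    · rw [hQzero (hχC_zero_near n x hnear), norm_zero]
      exact hind_nn
    · push_neg at hnear
      rw [Set.indicator_of_mem (show x ∈ {y : E3 | R n ≤ ‖y‖} from hnear)]
      have h9CM : 0 ≤ 9*C*(M2 x) := by
        have := hM2nn x
        positivity
      by_cases hfar : 2 * R n < ‖x‖
      · rw [hQzero (hχC_zero_far n x hfar), norm_zero]
        exact h9CM
      · push_neg at hfar
        have hb1 : ‖(∑ i : Fin 3, fderiv ℝ (χC n) x (v i) * E x i) * g x‖
            ≤ (3 * (C * (R n)⁻¹)) * (‖E x‖ * ‖η x‖) := by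
          rw [norm_mul]
          have hgnorm : ‖g x‖ = ‖η x‖ := norm_star _
          rw [hgnorm]
          have hsum : ‖∑ i : Fin 3, fderiv ℝ (χC n) x (v i) * E x i‖
              ≤ 3 * (C * (R n)⁻¹) * ‖E x‖ := by
            calc ‖∑ i : Fin 3, fderiv ℝ (χC n) x (v i) * E x i‖
                ≤ ∑ i : Fin 3, ‖fderiv ℝ (χC n) x (v i) * E x i‖ := norm_sum_le _ _
              _ ≤ ∑ _i : Fin 3, (C * (R n)⁻¹) * ‖E x‖ := by
                  apply Finset.sum_le_sum
                  intro i _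
                  rw [norm_mul]
                  exact mul_le_mul (hχC_pd_bound n i x) (coordNorm_le _ i)
                    (norm_nonneg _) (by positivity)
              _ = 3 * (C * (R n)⁻¹) * ‖E x‖ := by
                  rw [Finset.sum_const, Finset.card_univ, Fintype.card_fin, nsmul_eq_mul]
                  push_cast
                  ring
          calc ‖∑ i : Fin 3, fderiv ℝ (χC n) x (v i) * E x i‖ * ‖η x‖
              ≤ (3 * (C * (R n)⁻¹) * ‖E x‖) * ‖η x‖ :=
                mul_le_mul_of_nonneg_right hsum (norm_nonneg _)
            _ = (3 * (C * (R n)⁻¹)) * (‖E x‖ * ‖η x‖) := by ring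
        have hb2 : (R n)⁻¹ ≤ 3 * ((1:ℝ)+‖x‖^2) ^ (-(1:ℝ)/2) := by
          have hW : (0:ℝ) < 1+‖x‖^2 := by positivity
          have hRn : (0:ℝ) < R n := lt_of_lt_of_le one_pos (hR1 n)
          have hWle : ((1:ℝ)+‖x‖^2) ^ ((1:ℝ)/2) ≤ 3 * R n := by
            have h9 : (1:ℝ)+‖x‖^2 ≤ (3 * R n)^2 := by
              have h1 := hR1 n
              have h2 : ‖x‖^2 ≤ (2 * R n)^2 := by
                have := norm_nonneg x
                nlinarith
              nlinarith
            calc ((1:ℝ)+‖x‖^2) ^ ((1:ℝ)/2) = Real.sqrt ((1:ℝ)+‖x‖^2) :=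
                (Real.rpow_natCast _ _ ▸ (Real.sqrt_eq_rpow _).symm)
              _ ≤ Real.sqrt ((3*R n)^2) := Real.sqrt_le_sqrt h9
              _ = 3 * R n := Real.sqrt_sq (by positivity)
          have hWpos : (0:ℝ) < ((1:ℝ)+‖x‖^2) ^ ((1:ℝ)/2) := Real.rpow_pos_of_pos hW _
          have hneg : ((1:ℝ)+‖x‖^2) ^ (-(1:ℝ)/2) = (((1:ℝ)+‖x‖^2) ^ ((1:ℝ)/2))⁻¹ := by
            rw [← Real.rpow_neg hW.le]
            norm_num
          rw [hneg]
          calc (R n)⁻¹ = 3 * (3 * R n)⁻¹ := by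
                field_simp
            _ ≤ 3 * (((1:ℝ)+‖x‖^2) ^ ((1:ℝ)/2))⁻¹ := by
                gcongr
        calc ‖(∑ i : Fin 3, fderiv ℝ (χC n) x (v i) * E x i) * g x‖
            ≤ (3 * (C * (R n)⁻¹)) * (‖E x‖ * ‖η x‖) := hb1
          _ ≤ (3 * (C * (3 * ((1:ℝ)+‖x‖^2) ^ (-(1:ℝ)/2)))) * (‖E x‖ * ‖η x‖) := by
              have hprod : 0 ≤ ‖E x‖ * ‖η x‖ := by positivity
              have : C * (R n)⁻¹ ≤ C * (3 * ((1:ℝ)+‖x‖^2) ^ (-(1:ℝ)/2)) :=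
                mul_le_mul_of_nonneg_left hb2 hC0
              nlinarith
          _ = 9*C*(((1:ℝ)+‖x‖^2) ^ (-(1:ℝ)/2) * (‖E x‖ * ‖η x‖)) := by ring
          _ ≤ 9*C*(M2 x) := by
              have h := hEtaProd_le x
              have h9 : (0:ℝ) ≤ 9*C := by positivity
              nlinarith
  have hTbound : ∀ n, ‖T n‖ ≤ ∫ x, ({y : E3 | R n ≤ ‖y‖}).indicator (fun y => 9*C*(M2 y)) x := by
    intro n
    rw [hTdef]
    exact norm_integral_le_of_norm_le (hGint n) (Eventually.of_forall (hQbound n))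
  have hA0 : Tendsto (fun n => ∫ x, ({y : E3 | R n ≤ ‖y‖}).indicator (fun y => 9*C*(M2 y)) x)
      atTop (𝓝 0) := by
    have hDC := tendsto_integral_of_dominated_convergence
      (F := fun n => ({y : E3 | R n ≤ ‖y‖}).indicator (fun y => 9*C*(M2 y)))
      (f := fun _ => (0:ℝ)) (fun x => 9*C*(M2 x))
      (fun n => (hGint n).aestronglyMeasurable)
      (hM2.const_mul (9*C))
      (fun n => Eventually.of_forall fun x => by
        rw [Real.norm_eq_abs, abs_of_nonneg (Set.indicator_nonneg (fun y _ => by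
          have := hM2nn y
          positivity) x)]
        exact Set.indicator_le_self' (fun y _ => by
          have := hM2nn y
          positivity) x)
      (Eventually.of_forall fun x => by
        obtain ⟨N, hN⟩ := exists_nat_gt ‖x‖
        apply tendsto_atTop_of_eventually_const (i₀ := N)
        intro n hn
        apply Set.indicator_of_notMem
        simp only [Set.mem_setOf_eq, not_le]
        have : (N:ℝ) ≤ (n:ℝ) := Nat.cast_le.mpr hn
        have hR : R n = (n:ℝ) + 1 := rfl
        rw [hR]
        linarith)
    simpa using hDC
  have hT0 : Tendsto T atTop (𝓝 0) := squeeze_zero_norm hTbound hA0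
  -- convergence of L to the target integral
  have hLbound : ∀ n x, ‖∑ i : Fin 3, χC n x * (E x i * (starRingEnd ℂ) (pd i η x))‖
      ≤ 3 * M1 x := by
    intro n x
    calc ‖∑ i : Fin 3, χC n x * (E x i * (starRingEnd ℂ) (pd i η x))‖
        = ‖χC n x * ∑ i : Fin 3, E x i * (starRingEnd ℂ) (pd i η x)‖ := by
          rw [Finset.mul_sum]
      _ = ‖χC n x‖ * ‖∑ i : Fin 3, E x i * (starRingEnd ℂ) (pd i η x)‖ := norm_mul _ _
      _ ≤ 1 * (3 * M1 x) := by
          apply mul_le_mul (hχC_norm n x) (key1 x) (norm_nonneg _) zero_le_one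
      _ = 3 * M1 x := one_mul _
  have hLtend : Tendsto L atTop
      (𝓝 (∫ x : E3, ∑ i : Fin 3, E x i * (starRingEnd ℂ) (pd i η x))) := by
    rw [hLdef]
    apply tendsto_integral_of_dominated_convergence (fun x => 3 * M1 x)
      (fun n => (continuous_finset_sum _ fun i _ =>
        (hχC_cont n).mul ((cEi i).mul (continuous_star.comp (cpd i)))).aestronglyMeasurable)
      (hM1.const_mul 3)
      (fun n => Eventually.of_forall (hLbound n))
    apply Eventually.of_forall
    intro x
    obtain ⟨N, hN⟩ := exists_nat_gt ‖x‖
    apply tendsto_atTop_of_eventually_const (i₀ := N)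
    intro n hn
    have hxR : ‖x‖ ≤ R n := by
      have : (N:ℝ) ≤ (n:ℝ) := Nat.cast_le.mpr hn
      have hR : R n = (n:ℝ) + 1 := rfl
      rw [hR]
      linarith
    have hone : ∀ i : Fin 3, χC n x * (E x i * (starRingEnd ℂ) (pd i η x))
        = E x i * (starRingEnd ℂ) (pd i η x) := fun i => by
      rw [hχC_one n x hxR, one_mul]
    exact Finset.sum_congr rfl fun i _ => hone i
  have hL0 : Tendsto L atTop (𝓝 0) := by
    have h := hT0.neg
    rw [neg_zero] at h
    exact h.congr fun n => (hLT n).symm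
  exact tendsto_nhds_unique hLtend hL0
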